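/- arXiv:1105.1364 — 2 statements merged into one kernel-verified Lean document; each statement's English description precedes it below -/
import Mathlib

section
/- An instance D is admissible for a secrecy view V^s (i.e., the N-answer extension of V^s on D is empty or contains only the all-null tuple) if and only if D classically satisfies the sentence Null-V^s: for all tuples making the body R_1(x̄_1) ∧ ... ∧ R_n(x̄_n) true, either some combination-attribute variable equals null, or all secrecy-attribute (head) variables equal null, or the built-in condition φ fails. -/
/-- For the join secrecy view `V(x,z) ← P(x,y), R(y,z)` (with `y` the only
relevant variable), the instance is admissible — i.e. the N-extension of the
view is empty or contains only the all-null tuple — iff it classically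
satisfies the sentence `Null-V`:
`∀ x y z (P(x,y) ∧ R(y,z) → y = null ∨ (x = null ∧ z = null))`. -/
theorem stmt6 {U : Type*} (null : U) (P R : Set (U × U)) :
    ({ac : U × U | ∃ b, b ≠ null ∧ (ac.1, b) ∈ P ∧ (b, ac.2) ∈ R}
        ⊆ {((null, null) : U × U)})
      ↔ (∀ x y z : U, (x, y) ∈ P → (y, z) ∈ R → y = null ∨ (x = null ∧ z = null)) := by
  constructor
  · intro hadm x y z hxy hyz
    by_cases hy : y = null
    · exact .inl hy
    · exact .inr (Prod.ext_iff.mp (hadm (a := (x, z)) ⟨y, hy, hxy, hyz⟩))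
  · rintro hnull ⟨x, z⟩ ⟨y, hy, hxy, hyz⟩
    obtain ⟨rfl, rfl⟩ := (hnull x y z hxy hyz).resolve_left hy
    rfl
end

section
/- Secret query answering is non-monotonic: there exist an instance D, a secrecy view V, a query Q, and a superset instance D1 ⊇ D such that SA(Q, D, {V}) ⊄ SA(Q, D1, {V}). Concretely, with D = {P(a)}, V(x) ← P(x), R(x), and Q(x) = P(x): SA(Q,D,{V}) = {a} but SA(Q,D1,{V}) = ∅ for D1 = {P(a), R(a)}. -/
/-- Information order on values. -/
def iord {U : Type*} (null : U) (c d : U) : Prop := c = d ∨ (c = null ∧ d ≠ null)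

/-- Instances for the schema {P(A), R(A)} with tuple identifiers: a pair of
functions giving the (single-attribute) tuples of `P` and of `R`. -/
def Corr13 {U I J : Type*} (null : U) (D D' : (I → U) × (J → U)) : Prop :=
  (∀ i, iord null (D'.1 i) (D.1 i)) ∧ (∀ j, iord null (D'.2 j) (D.2 j))

/-- Admissibility for the secrecy view `V(x) ← P(x), R(x)`: since `x` is
relevant it cannot be null, so admissibility means there is no non-null value
occurring both in `P` and in `R`. -/
def Adm13 {U I J : Type*} (null : U) (D' : (I → U) × (J → U)) : Prop :=
  ¬ ∃ c, c ≠ null ∧ (∃ i, D'.1 i = c) ∧ (∃ j, D'.2 j = c)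

/-- Secrecy instances: admissible `D`-correlated instances that are
`≤_D`-minimal (no admissible correlated instance is strictly more informative). -/
def Sec13 {U I J : Type*} (null : U) (D : (I → U) × (J → U)) :
    Set ((I → U) × (J → U)) :=
  {D' | Corr13 null D D' ∧ Adm13 null D' ∧
    ∀ D'', Corr13 null D D'' → Adm13 null D'' →
      ((∀ i, iord null (D'.1 i) (D''.1 i)) ∧ (∀ j, iord null (D'.2 j) (D''.2 j))) →
        D'' = D'}

/-- Secret answers to the query `Q(x) = P(x)` (whose free variable is not
relevant): intersection over all secrecy instances of the `P`-extension. -/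
def SA13 {U I J : Type*} (null : U) (D : (I → U) × (J → U)) : Set U :=
  {c | ∀ D' ∈ Sec13 null D, c ∈ Set.range D'.1}

/-! The unary instance `{P(a)}` is already admissible, so it is its own unique secrecy instance and
the secret answers are `{a}`. Adding `R(a)` forces one of the two occurrences of `a` to be nulled:
`{P(a), R(null)}` and `{P(null), R(a)}` are both secrecy instances, and no value survives in the
`P`-extension of both. -/

section

variable {U I J : Type*} {null : U}

theorem iord_refl (c : U) : iord null c c := Or.inl rfl

theorem eq_of_iord_of_ne_null {c d : U} (h : iord null c d) (hc : c ≠ null) : c = d :=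
  h.resolve_right fun h' => hc h'.1

theorem iord_antisymm {c d : U} (hcd : iord null c d) (hdc : iord null d c) : c = d := by
  rcases hcd with h | ⟨hc, hd⟩
  · exact h
  · exact (eq_of_iord_of_ne_null hdc hd).symm

theorem corr13_refl (D : (I → U) × (J → U)) : Corr13 null D D :=
  ⟨fun _ => iord_refl _, fun _ => iord_refl _⟩

theorem adm13_of_isEmpty [IsEmpty J] (D : (I → U) × (J → U)) : Adm13 null D :=
  fun ⟨_, _, _, j, _⟩ => isEmptyElim j

theorem sec13_eq_singleton_of_adm13 {D : (I → U) × (J → U)} (hD : Adm13 null D) :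
    Sec13 null D = {D} := by
  refine Set.eq_singleton_iff_unique_mem.2 ⟨?_, fun D' ⟨hcorr, _, hmin⟩ => ?_⟩
  · refine ⟨corr13_refl D, hD, fun D'' ⟨h1, h2⟩ _ ⟨g1, g2⟩ => Prod.ext ?_ ?_⟩
    · funext i; exact iord_antisymm (h1 i) (g1 i)
    · funext j; exact iord_antisymm (h2 j) (g2 j)
  · exact (hmin D (corr13_refl D) hD hcorr).symm

theorem sa13_eq_range_of_adm13 {D : (I → U) × (J → U)} (hD : Adm13 null D) :
    SA13 null D = Set.range D.1 := by
  ext c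
  simp [SA13, sec13_eq_singleton_of_adm13 hD]

theorem swap_mem_sec13 {D D' : (I → U) × (J → U)} (h : D' ∈ Sec13 null D) :
    D'.swap ∈ Sec13 null D.swap := by
  obtain ⟨⟨h1, h2⟩, hadm, hmin⟩ := h
  refine ⟨⟨h2, h1⟩, fun ⟨c, hc, hP, hR⟩ => hadm ⟨c, hc, hR, hP⟩, ?_⟩
  rintro D'' ⟨c1, c2⟩ hadm'' ⟨g1, g2⟩
  have := hmin D''.swap ⟨c2, c1⟩ (fun ⟨c, hc, hP, hR⟩ => hadm'' ⟨c, hc, hR, hP⟩) ⟨g2, g1⟩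
  rw [← this, Prod.swap_swap]

theorem const_const_null_mem_sec13 [Nonempty I] {a : U} (ha : a ≠ null) :
    ((fun _ : I => a, fun _ : J => null) : (I → U) × (J → U)) ∈
      Sec13 null (fun _ => a, fun _ => a) := by
  refine ⟨⟨fun _ => iord_refl a, fun _ => Or.inr ⟨rfl, ha⟩⟩, ?_, ?_⟩
  · rintro ⟨c, hc, -, j, hj⟩
    exact hc hj.symm
  · rintro D'' ⟨-, c2⟩ hadm ⟨g1, -⟩
    have hP : D''.1 = fun _ => a := funext fun i => (eq_of_iord_of_ne_null (g1 i) ha).symm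
    refine Prod.ext hP (funext fun j => ?_)
    by_contra hj
    -- a non-null `R`-entry below `a` must be `a` itself, which `P` also contains
    have hRa : D''.2 j = a := eq_of_iord_of_ne_null (c2 j) hj
    exact hadm ⟨a, ha, ⟨Classical.arbitrary I, by rw [hP]⟩, j, hRa⟩

theorem sa13_const_const_eq_empty [Nonempty I] [Nonempty J] {a : U} (ha : a ≠ null) :
    SA13 null ((fun _ : I => a, fun _ : J => a) : (I → U) × (J → U)) = ∅ := by
  refine Set.eq_empty_of_forall_notMem fun c hc => ha ?_
  have hPa : c ∈ Set.range fun _ : I => a := hc _ (const_const_null_mem_sec13 ha)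
  have hPnull : c ∈ Set.range fun _ : I => null :=
    hc _ (swap_mem_sec13 (const_const_null_mem_sec13 (I := J) (J := I) ha))
  rw [Set.range_const] at hPa hPnull
  exact hPa.symm.trans hPnull

end

/-- Non-monotonicity of secret query answering: for `D = {P(a)}` and
`D1 = {P(a), R(a)}` with secrecy view `V(x) ← P(x), R(x)` and query
`Q(x) = P(x)`, we have `SA(Q,D) = {a}`, `SA(Q,D1) = ∅`, so
`SA(Q,D) ⊄ SA(Q,D1)`. -/
theorem stmt13 {U : Type*} (null a : U) (ha : a ≠ null) :
    SA13 null ((fun _ : Unit => a, fun x : Empty => x.elim)) = {a} ∧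
    SA13 null ((fun _ : Unit => a, fun _ : Unit => a)) = (∅ : Set U) ∧
    ¬ (SA13 null ((fun _ : Unit => a, fun x : Empty => x.elim)) ⊆
        SA13 null ((fun _ : Unit => a, fun _ : Unit => a))) := by
  have hD : SA13 null ((fun _ : Unit => a, fun x : Empty => x.elim)) = {a} := by
    rw [sa13_eq_range_of_adm13 (adm13_of_isEmpty _), Set.range_const]
  have hD1 : SA13 null ((fun _ : Unit => a, fun _ : Unit => a)) = (∅ : Set U) :=
    sa13_const_const_eq_empty ha
  refine ⟨hD, hD1, ?_⟩
  rw [hD, hD1, Set.subset_empty_iff]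
  exact Set.singleton_ne_empty a
end
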